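/- Let Ω be a bounded smooth domain in ℝ^N, and let (u,v) be a classical solution on [0,T) of the system u_t = J*u − u + u^α v^p, v_t = Δv + u^q v^β in Ω×(0,T) with u = 0 on (ℝ^N∖Ω)×(0,T), v = 0 on ∂Ω×(0,T), and nonnegative continuous initial data. If α < 1, β < 1 and pq − (1−α)(1−β) < 0, then the solution is uniformly bounded: there exists a constant M (depending only on Ω, J, α, β, p, q and the initial data) such that u(x,t) ≤ M and v(x,t) ≤ M for all x ∈ Ω and t ∈ [0,T). -/

import Mathlib

open MeasureTheory Real Set Filter Topology

noncomputable def convol {N : ℕ} (J u : EuclideanSpace ℝ (Fin N) → ℝ)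
    (x : EuclideanSpace ℝ (Fin N)) : ℝ :=
  ∫ y, J (x - y) * u y

noncomputable def lap {N : ℕ} (f : EuclideanSpace ℝ (Fin N) → ℝ)
    (x : EuclideanSpace ℝ (Fin N)) : ℝ :=
  ∑ i : Fin N, fderiv ℝ (fun y => fderiv ℝ f y (EuclideanSpace.single i 1)) x
    (EuclideanSpace.single i 1)

/-- `(u, v)` is a (classical) solution of the system `u_t = J*u - u + u^α v^p`,
`v_t = Δ v + u^q v^β` in `Ω × (0,T)` with Dirichlet conditions `u = 0` outside `Ω`,
`v = 0` on `∂Ω`, and initial data `(u₀, v₀)`. -/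
def IsSol {N : ℕ} (Ω : Set (EuclideanSpace ℝ (Fin N))) (J : EuclideanSpace ℝ (Fin N) → ℝ)
    (α β p q : ℝ) (u v : EuclideanSpace ℝ (Fin N) → ℝ → ℝ)
    (u₀ v₀ : EuclideanSpace ℝ (Fin N) → ℝ) (T : ℝ) : Prop :=
  (∀ x t, 0 ≤ u x t) ∧ (∀ x t, 0 ≤ v x t) ∧
  ContinuousOn (fun pr : EuclideanSpace ℝ (Fin N) × ℝ => u pr.1 pr.2)
    (Set.univ ×ˢ Set.Ico 0 T) ∧
  ContinuousOn (fun pr : EuclideanSpace ℝ (Fin N) × ℝ => v pr.1 pr.2)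
    (closure Ω ×ˢ Set.Ico 0 T) ∧
  (∀ t ∈ Set.Ioo (0:ℝ) T, ContDiffOn ℝ 2 (fun x => v x t) Ω) ∧
  (∀ x ∈ Ω, ∀ t ∈ Set.Ioo (0:ℝ) T,
    HasDerivAt (fun s => u x s)
      (convol J (fun y => u y t) x - u x t + u x t ^ α * v x t ^ p) t) ∧
  (∀ x ∈ Ω, ∀ t ∈ Set.Ioo (0:ℝ) T,
    HasDerivAt (fun s => v x s) (lap (fun y => v y t) x + u x t ^ q * v x t ^ β) t) ∧
  (∀ x, x ∉ Ω → ∀ t ∈ Set.Ico (0:ℝ) T, u x t = 0) ∧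
  (∀ x ∈ frontier Ω, ∀ t ∈ Set.Ico (0:ℝ) T, v x t = 0) ∧
  (∀ x, u x 0 = u₀ x) ∧ (∀ x, v x 0 = v₀ x)

/-- One-dimensional second derivative test: at a local max where the derivative is
differentiable, the second derivative is nonpositive. -/
lemma aux_second_deriv_nonpos {g : ℝ → ℝ} {c : ℝ}
    (hg : ∀ᶠ s in 𝓝 (0:ℝ), DifferentiableAt ℝ g s)
    (hmax : IsLocalMax g 0) (hd : HasDerivAt (deriv g) c 0) : c ≤ 0 := by
  by_contra hc
  push_neg at hc
  have h0 : deriv g 0 = 0 := hmax.deriv_eq_zero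
  have hslope : Tendsto (slope (deriv g) 0) (𝓝[≠] 0) (𝓝 c) :=
    hasDerivAt_iff_tendsto_slope.1 hd
  have hpos : ∀ᶠ s in 𝓝[≠] (0:ℝ), 0 < slope (deriv g) 0 s :=
    hslope.eventually (eventually_gt_nhds hc)
  rw [eventually_nhdsWithin_iff] at hpos
  have hall : ∀ᶠ s in 𝓝 (0:ℝ), (s ∈ ({0}ᶜ : Set ℝ) → 0 < slope (deriv g) 0 s)
      ∧ DifferentiableAt ℝ g s ∧ g s ≤ g 0 := hpos.and (hg.and hmax)
  obtain ⟨ε, hε, hball⟩ := Metric.eventually_nhds_iff.1 hall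
  have hhalf : 0 < ε/2 := by linarith
  have hmem : ∀ s ∈ Icc (0:ℝ) (ε/2), dist s 0 < ε := by
    intro s hs
    rw [Real.dist_eq, sub_zero, abs_of_nonneg hs.1]
    linarith [hs.2]
  have hmono : StrictMonoOn g (Icc 0 (ε/2)) := by
    apply strictMonoOn_of_deriv_pos (convex_Icc _ _)
    · intro s hs
      exact ((hball (hmem s hs)).2.1).continuousAt.continuousWithinAt
    · intro s hs
      rw [interior_Icc] at hs
      have hs0 : s ≠ 0 := ne_of_gt hs.1
      have := (hball (hmem s (Ioo_subset_Icc_self hs))).1 hs0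
      rw [slope_def_field] at this
      have this : 0 < deriv g s / s := by simpa [h0] using this
      have hspos : 0 < s := hs.1
      calc (0:ℝ) = 0 * s := by ring
        _ < (deriv g s / s) * s := by
            exact mul_lt_mul_of_pos_right this hspos
        _ = deriv g s := by field_simp
  have h1 : g 0 < g (ε/2) :=
    hmono ⟨le_refl 0, le_of_lt hhalf⟩ ⟨le_of_lt hhalf, le_refl _⟩ hhalf
  have h2 : g (ε/2) ≤ g 0 := (hball (hmem _ ⟨le_of_lt hhalf, le_refl _⟩)).2.2
  linarith

/-- At an interior local maximum of a `C²` function the (nonlocal, coordinatewise)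
Laplacian is nonpositive. -/
lemma aux_lap_nonpos {N : ℕ} {f : EuclideanSpace ℝ (Fin N) → ℝ}
    {Ω : Set (EuclideanSpace ℝ (Fin N))} (hΩo : IsOpen Ω) {x₀ : EuclideanSpace ℝ (Fin N)}
    (hx₀ : x₀ ∈ Ω) (hf : ContDiffOn ℝ 2 f Ω) (hmax : IsLocalMax f x₀) : lap f x₀ ≤ 0 := by
  have hdiff : ∀ y ∈ Ω, DifferentiableAt ℝ f y := fun y hy =>
    (hf.differentiableOn (by norm_num)).differentiableAt (hΩo.mem_nhds hy)
  have hcd : ContDiffAt ℝ 2 f x₀ := (hf x₀ hx₀).contDiffAt (hΩo.mem_nhds hx₀)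
  have hfd : ContDiffAt ℝ 1 (fderiv ℝ f) x₀ := hcd.fderiv_right (by norm_num)
  have hfd' : DifferentiableAt ℝ (fderiv ℝ f) x₀ := hfd.differentiableAt (by norm_num)
  apply Finset.sum_nonpos
  intro i _
  set w : EuclideanSpace ℝ (Fin N) := EuclideanSpace.single i 1 with hw
  set L : ℝ → EuclideanSpace ℝ (Fin N) := fun s => x₀ + s • w with hL
  have hLd : ∀ s : ℝ, HasDerivAt L w s := by
    intro s
    rw [hL]; simpa using ((hasDerivAt_id s).smul_const w).const_add x₀
  have hLc : Continuous L := by fun_prop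
  have hL0 : L 0 = x₀ := by simp [hL]
  set g : ℝ → ℝ := fun s => f (L s) with hg
  have hU : ∀ᶠ s in 𝓝 (0:ℝ), L s ∈ Ω := by
    have : Tendsto L (𝓝 0) (𝓝 x₀) := by
      rw [← hL0]; exact hLc.continuousAt
    exact this.eventually (hΩo.mem_nhds hx₀)
  have hgderiv : ∀ᶠ s in 𝓝 (0:ℝ), HasDerivAt g (fderiv ℝ f (L s) w) s := by
    filter_upwards [hU] with s hs
    exact ((hdiff (L s) hs).hasFDerivAt).comp_hasDerivAt s (hLd s)
  have hgdiff : ∀ᶠ s in 𝓝 (0:ℝ), DifferentiableAt ℝ g s := by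
    filter_upwards [hgderiv] with s hs using hs.differentiableAt
  have hgmax : IsLocalMax g 0 := by
    have hT : Tendsto L (𝓝 0) (𝓝 x₀) := by
      rw [← hL0]; exact hLc.continuousAt
    have := hT.eventually hmax
    filter_upwards [this] with s hs
    simpa [hg, hL0] using hs
  have hder2 : HasDerivAt (fun s => fderiv ℝ f (L s) w)
      (fderiv ℝ (fderiv ℝ f) x₀ w w) 0 := by
    have h1 : HasDerivAt (fun s => fderiv ℝ f (L s)) (fderiv ℝ (fderiv ℝ f) x₀ w) 0 := by
      have h0 : HasFDerivAt (fderiv ℝ f) (fderiv ℝ (fderiv ℝ f) x₀) (L 0) := by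
        rw [hL0]; exact hfd'.hasFDerivAt
      exact h0.comp_hasDerivAt 0 (hLd 0)
    have := h1.clm_apply (hasDerivAt_const (0:ℝ) w)
    simpa using this
  have hcongr : deriv g =ᶠ[𝓝 (0:ℝ)] fun s => fderiv ℝ f (L s) w := by
    filter_upwards [hgderiv] with s hs using hs.deriv
  have hd : HasDerivAt (deriv g) (fderiv ℝ (fderiv ℝ f) x₀ w w) 0 :=
    hder2.congr_of_eventuallyEq hcongr
  have key : fderiv ℝ (fderiv ℝ f) x₀ w w ≤ 0 :=
    aux_second_deriv_nonpos hgdiff hgmax hd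
  have hterm : fderiv ℝ (fun y => fderiv ℝ f y w) x₀ w = fderiv ℝ (fderiv ℝ f) x₀ w w := by
    have := fderiv_clm_apply hfd' (differentiableAt_const w)
    rw [this]
    simp
  rw [hterm]
  exact key

/-- If `α < 1`, `β < 1` and `pq - (1-α)(1-β) < 0`, then the solution is uniformly
bounded on `Ω × [0, T)`. -/
theorem stmt1
    {N : ℕ} (Ω : Set (EuclideanSpace ℝ (Fin N)))
    (hΩo : IsOpen Ω) (hΩb : Bornology.IsBounded Ω) (hΩne : Ω.Nonempty)
    (J : EuclideanSpace ℝ (Fin N) → ℝ) (hJc : Continuous J) (hJs : HasCompactSupport J)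
    (hJnn : ∀ x, 0 ≤ J x) (hJ0 : 0 < J 0) (hJ1 : ∫ x, J x = 1)
    (α β p q : ℝ) (hp : 0 < p) (hq : 0 < q) (hα : 0 ≤ α) (hβ : 0 ≤ β)
    (u v : EuclideanSpace ℝ (Fin N) → ℝ → ℝ) (u₀ v₀ : EuclideanSpace ℝ (Fin N) → ℝ)
    (hu₀c : Continuous u₀) (hv₀c : Continuous v₀)
    (hu₀ : ∀ x, 0 ≤ u₀ x) (hv₀ : ∀ x, 0 ≤ v₀ x)
    (T : ℝ) (hT : 0 < T) (hsol : IsSol Ω J α β p q u v u₀ v₀ T)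
    (h1 : α < 1) (h2 : β < 1) (h3 : p * q - (1 - α) * (1 - β) < 0) :
    ∃ M : ℝ, ∀ x ∈ Ω, ∀ t ∈ Set.Ico (0:ℝ) T, u x t ≤ M ∧ v x t ≤ M := by
  obtain ⟨hun, hvn, hucont, hvcont, hvreg, hueqn, hveqn, hubc, hvbc, hu0, hv0⟩ := hsol
  set K := closure Ω with hK_def
  have hKcomp : IsCompact K := Metric.isCompact_of_isClosed_isBounded isClosed_closure hΩb.closure
  have hKne : K.Nonempty := hΩne.closure
  have hΩK : Ω ⊆ K := subset_closure
  obtain ⟨zu, hzu, hzumax⟩ := hKcomp.exists_isMaxOn hKne hu₀c.continuousOn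
  obtain ⟨zv, hzv, hzvmax⟩ := hKcomp.exists_isMaxOn hKne hv₀c.continuousOn
  set Mu := u₀ zu with hMu_def
  set Mv := v₀ zv with hMv_def
  have hMu : 0 ≤ Mu := hu₀ zu
  have hMv : 0 ≤ Mv := hv₀ zv
  -- parameters
  set a : ℝ := (1-β)/q with ha_def
  have ha : 0 < a := div_pos (by linarith) hq
  have hqa : q * a = 1 - β := by rw [ha_def]; field_simp
  set θ : ℝ := (q/(1-β) + (1-α)/p)/2 with hθ_def
  have hθq : q/(1-β) < (1-α)/p := by
    rw [div_lt_div_iff₀ (by linarith) hp]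
    nlinarith only [h3]
  have hθl : q/(1-β) < θ := by rw [hθ_def]; linarith
  have hθr : θ < (1-α)/p := by rw [hθ_def]; linarith
  have hθpos : 0 < θ := lt_trans (div_pos hq (by linarith)) hθl
  set e1 : ℝ := 1 - α - θ*p with he1_def
  have he1 : 0 < e1 := by
    have := (lt_div_iff₀ hp).1 hθr
    rw [he1_def]; linarith
  set A : ℝ := max 2 (max ((1/a)^(e1⁻¹) + 1) (max (Mu + 1) ((Mv + 1)^(θ⁻¹) + 1))) with hA_def
  have hA1 : (1:ℝ) < A := lt_of_lt_of_le one_lt_two (le_max_left _ _)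
  have hApos : (0:ℝ) < A := by linarith
  have hA2 : (1/a)^(e1⁻¹) < A :=
    lt_of_lt_of_le (lt_add_one _) (le_trans (le_max_left _ _) (le_max_right _ _))
  have hA3 : Mu < A :=
    lt_of_lt_of_le (lt_add_one _)
      (le_trans (le_trans (le_max_left _ _) (le_max_right _ _)) (le_max_right _ _))
  have hA4 : (Mv + 1)^(θ⁻¹) < A :=
    lt_of_lt_of_le (lt_add_one _)
      (le_trans (le_trans (le_max_right _ _) (le_max_right _ _)) (le_max_right _ _))
  set B : ℝ := A^θ with hB_def
  have hBpos : 0 < B := Real.rpow_pos_of_pos hApos θ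
  have hB1 : 1 < B := Real.one_lt_rpow_iff_of_pos hApos |>.2 (Or.inl ⟨hA1, hθpos⟩)
  have hMvB : Mv < B := by
    have h1' : (Mv+1) = ((Mv+1)^(θ⁻¹))^θ :=
      (Real.rpow_inv_rpow (by linarith) (ne_of_gt hθpos)).symm
    have h2' : ((Mv+1)^(θ⁻¹))^θ < A^θ :=
      Real.rpow_lt_rpow (Real.rpow_nonneg (by linarith) _) hA4 hθpos
    rw [hB_def]
    calc Mv < Mv + 1 := lt_add_one _
      _ = ((Mv+1)^(θ⁻¹))^θ := h1'
      _ < A^θ := h2'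
  have hc1 : A^α * B^p < a * A := by
    have hae : (1:ℝ)/a < A^e1 := by
      calc 1/a = ((1/a)^(e1⁻¹))^e1 :=
            (Real.rpow_inv_rpow (by positivity) (ne_of_gt he1)).symm
        _ < A^e1 := Real.rpow_lt_rpow (Real.rpow_nonneg (by positivity) _) hA2 he1
    have hAe1pos : 0 < A^e1 := Real.rpow_pos_of_pos hApos _
    have hinv : (A^e1)⁻¹ < a := by
      rw [inv_lt_comm₀ hAe1pos ha]
      rwa [one_div] at hae
    have hcomb : A^α * B^p = A * (A^e1)⁻¹ := by
      rw [hB_def, ← Real.rpow_mul (le_of_lt hApos), ← Real.rpow_add hApos]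
      rw [← Real.rpow_neg (le_of_lt hApos)]
      nth_rewrite 2 [show A = A^(1:ℝ) by rw [Real.rpow_one]]
      rw [← Real.rpow_add hApos]
      congr 1
      rw [he1_def]; ring
    rw [hcomb]
    calc A * (A^e1)⁻¹ < A * a := mul_lt_mul_of_pos_left hinv hApos
      _ = a * A := mul_comm _ _
  have hc2 : A^q * B^β < B := by
    have hexp : q + θ*β < θ := by
      have h5 := (div_lt_iff₀ (by linarith : (0:ℝ) < 1 - β)).1 hθl
      nlinarith only [h5]
    have hcomb : A^q * B^β = A^(q + θ*β) := by
      rw [hB_def, ← Real.rpow_mul (le_of_lt hApos), ← Real.rpow_add hApos]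
    rw [hcomb, hB_def]
    exact (Real.rpow_lt_rpow_left_iff hA1).2 hexp
  clear_value Mu Mv a θ e1 A B
  -- the supersolutions
  set Ub : ℝ → ℝ := fun t => A * exp (a*t) with hUb_def
  set Vb : ℝ → ℝ := fun t => B * exp t with hVb_def
  have hUbpos : ∀ t, 0 < Ub t := fun t => mul_pos hApos (exp_pos _)
  have hVbpos : ∀ t, 0 < Vb t := fun t => mul_pos hBpos (exp_pos _)
  have hUbc : Continuous Ub := by
    rw [hUb_def]; fun_prop
  have hVbc : Continuous Vb := by
    rw [hVb_def]; fun_prop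
  have hUbd : ∀ t, HasDerivAt Ub (a * Ub t) t := by
    intro t
    have h := (((hasDerivAt_id t).const_mul a).exp).const_mul A
    simp only [id_eq] at h
    have e : a * Ub t = A * (rexp (a*t) * (a*1)) := by
      show a * (A * exp (a*t)) = _
      ring
    rw [e]; exact h
  have hVbd : ∀ t, HasDerivAt Vb (Vb t) t := by
    intro t
    exact (Real.hasDerivAt_exp t).const_mul B
  have hE1 : ∀ t, 0 ≤ t → ∀ U V : ℝ, 0 ≤ U → U ≤ Ub t → 0 ≤ V → V ≤ Vb t →
      U^α * V^p < a * Ub t := by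
    intro t ht U V hU hUle hV hVle
    have hb1 : U^α ≤ (Ub t)^α := Real.rpow_le_rpow hU hUle hα
    have hb2 : V^p ≤ (Vb t)^p := Real.rpow_le_rpow hV hVle (le_of_lt hp)
    have hprod : U^α * V^p ≤ (Ub t)^α * (Vb t)^p :=
      mul_le_mul hb1 hb2 (Real.rpow_nonneg hV _) (Real.rpow_nonneg (le_of_lt (hUbpos t)) _)
    have hUbα : (Ub t)^α = A^α * exp (a*t*α) := by
      rw [hUb_def]
      simp only
      rw [Real.mul_rpow (le_of_lt hApos) (le_of_lt (exp_pos _)), ← Real.exp_mul]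
    have hVbp : (Vb t)^p = B^p * exp (t*p) := by
      rw [hVb_def]
      simp only
      rw [Real.mul_rpow (le_of_lt hBpos) (le_of_lt (exp_pos _)), ← Real.exp_mul]
    have hap : a*α + p < a := by
      have h4 : q*(a*α + p) < q*a := by
        have e : q*(a*α+p) = (q*a)*α + p*q := by ring
        rw [e, hqa]
        nlinarith only [h3]
      exact (mul_lt_mul_iff_right₀ hq).1 h4
    have hexple : exp (a*t*α + t*p) ≤ exp (a*t) := by
      apply exp_le_exp.2
      have h5 := mul_le_mul_of_nonneg_left (le_of_lt hap) ht
      linarith only [h5]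
    calc U^α * V^p ≤ (Ub t)^α * (Vb t)^p := hprod
      _ = (A^α * B^p) * exp (a*t*α + t*p) := by rw [hUbα, hVbp, Real.exp_add]; ring
      _ ≤ (A^α * B^p) * exp (a*t) := by
          apply mul_le_mul_of_nonneg_left hexple (by positivity)
      _ < (a*A) * exp (a*t) := mul_lt_mul_of_pos_right hc1 (exp_pos _)
      _ = a * Ub t := by rw [hUb_def]; ring
  have hE2 : ∀ t, 0 ≤ t → ∀ U V : ℝ, 0 ≤ U → U ≤ Ub t → 0 ≤ V → V ≤ Vb t →
      U^q * V^β < Vb t := by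
    intro t ht U V hU hUle hV hVle
    have hb1 : U^q ≤ (Ub t)^q := Real.rpow_le_rpow hU hUle (le_of_lt hq)
    have hb2 : V^β ≤ (Vb t)^β := Real.rpow_le_rpow hV hVle hβ
    have hprod : U^q * V^β ≤ (Ub t)^q * (Vb t)^β :=
      mul_le_mul hb1 hb2 (Real.rpow_nonneg hV _) (Real.rpow_nonneg (le_of_lt (hUbpos t)) _)
    have hUbq : (Ub t)^q = A^q * exp (a*t*q) := by
      rw [hUb_def]
      simp only
      rw [Real.mul_rpow (le_of_lt hApos) (le_of_lt (exp_pos _)), ← Real.exp_mul]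
    have hVbβ : (Vb t)^β = B^β * exp (t*β) := by
      rw [hVb_def]
      simp only
      rw [Real.mul_rpow (le_of_lt hBpos) (le_of_lt (exp_pos _)), ← Real.exp_mul]
    have hexpeq : a*t*q + t*β = t := by
      linear_combination t * hqa
    calc U^q * V^β ≤ (Ub t)^q * (Vb t)^β := hprod
      _ = (A^q * B^β) * exp (a*t*q + t*β) := by rw [hUbq, hVbβ, Real.exp_add]; ring
      _ = (A^q * B^β) * exp t := by rw [hexpeq]
      _ < B * exp t := mul_lt_mul_of_pos_right hc2 (exp_pos _)
      _ = Vb t := by rw [hVb_def]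
  have claim : ∀ τ, 0 ≤ τ → τ < T → ∀ x ∈ K, ∀ t, 0 ≤ t → t ≤ τ →
      u x t < Ub t ∧ v x t < Vb t := by
    intro τ hτ0 hτT
    set C : Set (EuclideanSpace ℝ (Fin N) × ℝ) :=
      ((K ×ˢ Icc 0 τ) ∩ (fun pr : EuclideanSpace ℝ (Fin N) × ℝ =>
          u pr.1 pr.2 - Ub pr.2) ⁻¹' Ici 0) ∪
      ((K ×ˢ Icc 0 τ) ∩ (fun pr : EuclideanSpace ℝ (Fin N) × ℝ =>
          v pr.1 pr.2 - Vb pr.2) ⁻¹' Ici 0) with hC_def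
    rcases eq_empty_or_nonempty C with hCe | hCne
    · -- empty exceptional set: strict bounds hold
      intro x hx t ht0 htτ
      have hD : (x, t) ∈ K ×ˢ Icc (0:ℝ) τ := ⟨hx, ht0, htτ⟩
      constructor
      · by_contra hle
        push_neg at hle
        have hmem : (x, t) ∈ C := Or.inl ⟨hD, by
          simp only [mem_preimage, mem_Ici]
          linarith⟩
        rw [hCe] at hmem
        exact hmem
      · by_contra hle
        push_neg at hle
        have hmem : (x, t) ∈ C := Or.inr ⟨hD, by
          simp only [mem_preimage, mem_Ici]
          linarith⟩
        rw [hCe] at hmem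
        exact hmem
    · exfalso
      have hsub : Icc (0:ℝ) τ ⊆ Ico 0 T := fun s hs => ⟨hs.1, lt_of_le_of_lt hs.2 hτT⟩
      have hDsubU : (K ×ˢ Icc (0:ℝ) τ) ⊆ univ ×ˢ Ico 0 T :=
        fun pr hpr => ⟨trivial, hsub hpr.2⟩
      have hDsubK : (K ×ˢ Icc (0:ℝ) τ) ⊆ K ×ˢ Ico 0 T := fun pr hpr => ⟨hpr.1, hsub hpr.2⟩
      have hfc : ContinuousOn (fun pr : EuclideanSpace ℝ (Fin N) × ℝ =>
          u pr.1 pr.2 - Ub pr.2) (K ×ˢ Icc 0 τ) :=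
        (hucont.mono hDsubU).sub (hUbc.comp continuous_snd).continuousOn
      have hgc : ContinuousOn (fun pr : EuclideanSpace ℝ (Fin N) × ℝ =>
          v pr.1 pr.2 - Vb pr.2) (K ×ˢ Icc 0 τ) :=
        (hvcont.mono hDsubK).sub (hVbc.comp continuous_snd).continuousOn
      have hDcl : IsClosed (K ×ˢ Icc (0:ℝ) τ) := isClosed_closure.prod isClosed_Icc
      have hDcp : IsCompact (K ×ˢ Icc (0:ℝ) τ) := hKcomp.prod isCompact_Icc
      have hCcl : IsClosed C := by
        rw [hC_def]
        exact (hfc.preimage_isClosed_of_isClosed hDcl isClosed_Ici).union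
          (hgc.preimage_isClosed_of_isClosed hDcl isClosed_Ici)
      have hCsubD : C ⊆ K ×ˢ Icc (0:ℝ) τ := by
        rw [hC_def]
        exact union_subset inter_subset_left inter_subset_left
      have hCcp : IsCompact C := hDcp.of_isClosed_subset hCcl hCsubD
      obtain ⟨⟨x₀, t₀⟩, hmemC, hminC⟩ := hCcp.exists_isMinOn hCne continuous_snd.continuousOn
      have hmin : ∀ pr ∈ C, t₀ ≤ pr.2 := fun pr h => hminC h
      have hD₀ : (x₀, t₀) ∈ K ×ˢ Icc (0:ℝ) τ := hCsubD hmemC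
      have hx₀K : x₀ ∈ K := hD₀.1
      have ht₀ : t₀ ∈ Icc (0:ℝ) τ := hD₀.2
      have ht₀T : t₀ < T := lt_of_le_of_lt ht₀.2 hτT
      -- strict bounds before time t₀
      have hbefore : ∀ x ∈ K, ∀ s, 0 ≤ s → s < t₀ → u x s < Ub s ∧ v x s < Vb s := by
        intro x hx s hs0 hst
        have hsD : (x, s) ∈ K ×ˢ Icc (0:ℝ) τ := ⟨hx, hs0, le_trans (le_of_lt hst) ht₀.2⟩
        constructor
        · by_contra hle
          push_neg at hle
          have : (x, s) ∈ C := Or.inl ⟨hsD, by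
            simp only [mem_preimage, mem_Ici]; linarith⟩
          exact absurd (hmin _ this) (not_le.2 hst)
        · by_contra hle
          push_neg at hle
          have : (x, s) ∈ C := Or.inr ⟨hsD, by
            simp only [mem_preimage, mem_Ici]; linarith⟩
          exact absurd (hmin _ this) (not_le.2 hst)
      -- t₀ is positive
      have ht₀pos : 0 < t₀ := by
        rcases lt_or_eq_of_le ht₀.1 with h | h
        · exact h
        · exfalso
          have hUb0 : Ub 0 = A := by rw [hUb_def]; simp
          have hVb0 : Vb 0 = B := by rw [hVb_def]; simp
          rcases hmemC with hmem | hmem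
          · have hge : (0:ℝ) ≤ u x₀ t₀ - Ub t₀ := hmem.2
            rw [← h] at hge
            rw [hu0 x₀, hUb0] at hge
            have : u₀ x₀ ≤ Mu := by rw [hMu_def]; exact hzumax hx₀K
            linarith
          · have hge : (0:ℝ) ≤ v x₀ t₀ - Vb t₀ := hmem.2
            rw [← h] at hge
            rw [hv0 x₀, hVb0] at hge
            have : v₀ x₀ ≤ Mv := by rw [hMv_def]; exact hzvmax hx₀K
            linarith
      -- limits at t₀: non-strict bounds at time t₀
      have hIoosub : Ioo (0:ℝ) t₀ ⊆ Ico 0 t₀ := fun s hs => ⟨le_of_lt hs.1, hs.2⟩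
      haveI hNB : (𝓝[Ico (0:ℝ) t₀] t₀).NeBot := by
        rw [← mem_closure_iff_nhdsWithin_neBot, closure_Ico ht₀pos.ne]
        exact ⟨le_of_lt ht₀pos, le_refl _⟩
      have hu_le : ∀ x, u x t₀ ≤ Ub t₀ := by
        intro x
        by_cases hx : x ∈ K
        · have hxt : ((x, t₀) : EuclideanSpace ℝ (Fin N) × ℝ) ∈ univ ×ˢ Ico 0 T :=
            ⟨trivial, ht₀.1, ht₀T⟩
          have hmap : MapsTo (fun s : ℝ => ((x : EuclideanSpace ℝ (Fin N)), s))
              (Ico 0 t₀) (univ ×ˢ Ico 0 T) :=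
            fun s hs => ⟨trivial, hs.1, lt_trans hs.2 ht₀T⟩
          have hcmp : ContinuousWithinAt (fun s => u x s) (Ico 0 t₀) t₀ :=
            (hucont (x, t₀) hxt).comp
              (continuous_const.prodMk continuous_id).continuousWithinAt hmap
          have hcw : ContinuousWithinAt (fun s => u x s - Ub s) (Ico 0 t₀) t₀ :=
            hcmp.sub hUbc.continuousAt.continuousWithinAt
          have hev : ∀ᶠ s in 𝓝[Ico (0:ℝ) t₀] t₀, u x s - Ub s ≤ 0 := by
            filter_upwards [eventually_mem_nhdsWithin] with s hs
            have := (hbefore x hx s hs.1 hs.2).1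
            linarith
          have h6 : u x t₀ - Ub t₀ ≤ 0 := le_of_tendsto hcw hev
          linarith
        · have hxΩ : x ∉ Ω := fun hc => hx (hΩK hc)
          rw [hubc x hxΩ t₀ ⟨ht₀.1, ht₀T⟩]
          exact le_of_lt (hUbpos t₀)
      have hv_le : ∀ x ∈ K, v x t₀ ≤ Vb t₀ := by
        intro x hx
        have hxt : ((x, t₀) : EuclideanSpace ℝ (Fin N) × ℝ) ∈ K ×ˢ Ico 0 T :=
          ⟨hx, ht₀.1, ht₀T⟩
        have hmap : MapsTo (fun s : ℝ => ((x : EuclideanSpace ℝ (Fin N)), s))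
            (Ico 0 t₀) (K ×ˢ Ico 0 T) :=
          fun s hs => ⟨hx, hs.1, lt_trans hs.2 ht₀T⟩
        have hcmp : ContinuousWithinAt (fun s => v x s) (Ico 0 t₀) t₀ :=
          (hvcont (x, t₀) hxt).comp
            (continuous_const.prodMk continuous_id).continuousWithinAt hmap
        have hcw : ContinuousWithinAt (fun s => v x s - Vb s) (Ico 0 t₀) t₀ :=
          hcmp.sub hVbc.continuousAt.continuousWithinAt
        have hev : ∀ᶠ s in 𝓝[Ico (0:ℝ) t₀] t₀, v x s - Vb s ≤ 0 := by
          filter_upwards [eventually_mem_nhdsWithin] with s hs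
          have := (hbefore x hx s hs.1 hs.2).2
          linarith
        have h6 : v x t₀ - Vb t₀ ≤ 0 := le_of_tendsto hcw hev
        linarith
      -- the filter for left slopes
      haveI hNB2 : (𝓝[Ioo (0:ℝ) t₀] t₀).NeBot := by
        rw [← mem_closure_iff_nhdsWithin_neBot, closure_Ioo ht₀pos.ne]
        exact ⟨le_of_lt ht₀pos, le_refl _⟩
      have hmono2 : 𝓝[Ioo (0:ℝ) t₀] t₀ ≤ 𝓝[≠] t₀ :=
        nhdsWithin_mono _ (fun s hs => ne_of_lt hs.2)
      rcases hmemC with hmem | hmem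
      · -- case: u touches its barrier
        have hgeU : (0:ℝ) ≤ u x₀ t₀ - Ub t₀ := hmem.2
        have hueq' : u x₀ t₀ = Ub t₀ := le_antisymm (hu_le x₀) (by linarith)
        have hx₀Ω : x₀ ∈ Ω := by
          by_contra hxo
          have := hubc x₀ hxo t₀ ⟨ht₀.1, ht₀T⟩
          rw [this] at hueq'
          exact absurd hueq'.symm (ne_of_gt (hUbpos t₀))
        have hud := hueqn x₀ hx₀Ω t₀ ⟨ht₀pos, ht₀T⟩
        have hgd : HasDerivAt (fun s => u x₀ s - Ub s)
            ((convol J (fun y => u y t₀) x₀ - u x₀ t₀ + u x₀ t₀ ^ α * v x₀ t₀ ^ p)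
              - a * Ub t₀) t₀ := hud.sub (hUbd t₀)
        have hslope := hasDerivAt_iff_tendsto_slope.1 hgd
        have hT2 := hslope.mono_left hmono2
        have hnn : ∀ᶠ s in 𝓝[Ioo (0:ℝ) t₀] t₀,
            0 ≤ slope (fun s => u x₀ s - Ub s) t₀ s := by
          filter_upwards [eventually_mem_nhdsWithin] with s hs
          rw [slope_def_field]
          have hnum : (u x₀ s - Ub s) - (u x₀ t₀ - Ub t₀) < 0 := by
            have := (hbefore x₀ hx₀K s (le_of_lt hs.1) hs.2).1
            rw [hueq']
            linarith
          have hden : s - t₀ < 0 := by linarith [hs.2]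
          exact le_of_lt (div_pos_of_neg_of_neg hnum hden)
        have h0le : 0 ≤ (convol J (fun y => u y t₀) x₀ - u x₀ t₀
            + u x₀ t₀ ^ α * v x₀ t₀ ^ p) - a * Ub t₀ := ge_of_tendsto hT2 hnn
        -- bound the convolution term
        have hcontu : Continuous (fun y => u y t₀) := by
          rw [← continuousOn_univ]
          exact hucont.comp (continuous_id.prodMk continuous_const).continuousOn
            (fun y _ => ⟨trivial, ht₀.1, ht₀T⟩)
        have hJx : Continuous (fun y => J (x₀ - y)) :=
          hJc.comp (continuous_const.sub continuous_id)
        have hJxs : HasCompactSupport (fun y => J (x₀ - y)) :=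
          hJs.comp_homeomorph (Homeomorph.subLeft x₀)
        have hint1 : Integrable (fun y => J (x₀ - y) * u y t₀) :=
          (hJx.mul hcontu).integrable_of_hasCompactSupport hJxs.mul_right
        have hint2 : Integrable (fun y => J (x₀ - y) * Ub t₀) :=
          (hJx.mul continuous_const).integrable_of_hasCompactSupport hJxs.mul_right
        have hmono3 : (∫ y, J (x₀ - y) * u y t₀) ≤ ∫ y, J (x₀ - y) * Ub t₀ :=
          integral_mono hint1 hint2
            (fun y => mul_le_mul_of_nonneg_left (hu_le y) (hJnn _))
        have heq1 : (∫ y, J (x₀ - y) * Ub t₀) = Ub t₀ := by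
          rw [integral_mul_const, integral_sub_left_eq_self J volume x₀, hJ1, one_mul]
        have hconv : convol J (fun y => u y t₀) x₀ ≤ Ub t₀ := by
          have : convol J (fun y => u y t₀) x₀ = ∫ y, J (x₀ - y) * u y t₀ := rfl
          rw [this]
          exact le_trans hmono3 (le_of_eq heq1)
        have hEE := hE1 t₀ (le_of_lt ht₀pos) (u x₀ t₀) (v x₀ t₀) (hun _ _)
          (le_of_eq hueq') (hvn _ _) (hv_le x₀ hx₀K)
        rw [hueq'] at h0le hEE
        linarith
      · -- case: v touches its barrier
        have hgeV : (0:ℝ) ≤ v x₀ t₀ - Vb t₀ := hmem.2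
        have hveq' : v x₀ t₀ = Vb t₀ := le_antisymm (hv_le x₀ hx₀K) (by linarith)
        have hx₀Ω : x₀ ∈ Ω := by
          by_contra hxo
          have hfr : x₀ ∈ frontier Ω := by
            rw [hΩo.frontier_eq]
            exact ⟨hx₀K, hxo⟩
          have := hvbc x₀ hfr t₀ ⟨ht₀.1, ht₀T⟩
          rw [this] at hveq'
          exact absurd hveq'.symm (ne_of_gt (hVbpos t₀))
        have hvd := hveqn x₀ hx₀Ω t₀ ⟨ht₀pos, ht₀T⟩
        have hgd : HasDerivAt (fun s => v x₀ s - Vb s)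
            ((lap (fun y => v y t₀) x₀ + u x₀ t₀ ^ q * v x₀ t₀ ^ β) - Vb t₀) t₀ :=
          hvd.sub (hVbd t₀)
        have hslope := hasDerivAt_iff_tendsto_slope.1 hgd
        have hT2 := hslope.mono_left hmono2
        have hnn : ∀ᶠ s in 𝓝[Ioo (0:ℝ) t₀] t₀,
            0 ≤ slope (fun s => v x₀ s - Vb s) t₀ s := by
          filter_upwards [eventually_mem_nhdsWithin] with s hs
          rw [slope_def_field]
          have hnum : (v x₀ s - Vb s) - (v x₀ t₀ - Vb t₀) < 0 := by
            have := (hbefore x₀ hx₀K s (le_of_lt hs.1) hs.2).2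
            rw [hveq']
            linarith
          have hden : s - t₀ < 0 := by linarith [hs.2]
          exact le_of_lt (div_pos_of_neg_of_neg hnum hden)
        have h0le : 0 ≤ (lap (fun y => v y t₀) x₀ + u x₀ t₀ ^ q * v x₀ t₀ ^ β) - Vb t₀ :=
          ge_of_tendsto hT2 hnn
        have hlocmax : IsLocalMax (fun y => v y t₀) x₀ := by
          filter_upwards [hΩo.mem_nhds hx₀Ω] with y hy
          calc v y t₀ ≤ Vb t₀ := hv_le y (hΩK hy)
            _ = v x₀ t₀ := hveq'.symm
        have hlap : lap (fun y => v y t₀) x₀ ≤ 0 :=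
          aux_lap_nonpos hΩo hx₀Ω (hvreg t₀ ⟨ht₀pos, ht₀T⟩) hlocmax
        have hEE := hE2 t₀ (le_of_lt ht₀pos) (u x₀ t₀) (v x₀ t₀) (hun _ _)
          (hu_le x₀) (hvn _ _) (le_of_eq hveq')
        linarith

  refine ⟨max (A * exp (a*T)) (B * exp T), ?_⟩
  intro x hx t ht
  obtain ⟨hut, hvt⟩ := claim t ht.1 ht.2 x (hΩK hx) t ht.1 (le_refl t)
  constructor
  · calc u x t ≤ A * exp (a*t) := le_of_lt hut
      _ ≤ A * exp (a*T) := by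
          apply mul_le_mul_of_nonneg_left _ (le_of_lt hApos)
          apply exp_le_exp.2
          exact mul_le_mul_of_nonneg_left ht.2.le ha.le
      _ ≤ max (A * exp (a*T)) (B * exp T) := le_max_left _ _
  · calc v x t ≤ B * exp t := le_of_lt hvt
      _ ≤ B * exp T := by
          apply mul_le_mul_of_nonneg_left _ (le_of_lt hBpos)
          exact exp_le_exp.2 ht.2.le
      _ ≤ max (A * exp (a*T)) (B * exp T) := le_max_right _ _
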